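/- Let 0<x<1 be real and r∈ℂ with Re(r)>1; set r* := r−1 (so Re(r*)>0). Then for every complex w with |w|<1 and |x^{−2}w|<1 the series ∑_{m=1}^∞ (1/m)·( (x^{rm}−x^{−rm})(x^m+x^{−m}) / (x^{r*m}−x^{−r*m}) )·w^m converges absolutely and exp( − ∑_{m=1}^∞ (1/m)·( (x^{rm}−x^{−rm})(x^m+x^{−m}) / (x^{r*m}−x^{−r*m}) )·w^m ) = (1−w) · (x^{−2}w;x^{2r*})_∞ / (x^{2r*+2}w;x^{2r*})_∞. -/

import Mathlib

/-!
Write `P = x^{rm}`, `Q = x^m` and `q = x^{2r*}`. Since `q^m = (P/Q)^2`, the `m`-th coefficient of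
the series splits as
`(P - P⁻¹)(Q + Q⁻¹)/(P Q⁻¹ - P⁻¹ Q) = 1 + (Q^{-2} - P^2)/(1 - q^m)`,
so the series is `∑ w^m/m + ∑ (a^m - b^m)/(m(1 - q^m))` with `a = x^{-2} w`, `b = x^{2r} w`.
Expanding `1/(1 - q^m)` geometrically and exchanging the two absolutely convergent summations gives
`∑_{m ≥ 1} a^m/(m(1 - q^m)) = -∑_j log(1 - q^j a) = -log (a;q)_∞`, and `∑ w^m/m = -log(1 - w)`
is the case `q = 0` of the same identity.
-/

open Complex

/-- `x^w := exp(w · log x)` for real `x` and complex `w`. -/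
noncomputable def xpow (x : ℝ) (w : ℂ) : ℂ := Complex.exp (w * (Real.log x : ℂ))

/-- The infinite `q`-Pochhammer product `(z;q)_∞ = ∏_{j=0}^∞ (1 − q^j z)`. -/
noncomputable def qPoch (z q : ℂ) : ℂ := ∏' j : ℕ, (1 - q ^ j * z)

/-- `Θ_q(z) = (z;q)_∞ (q z⁻¹;q)_∞ (q;q)_∞`. -/
noncomputable def jacTheta0 (q z : ℂ) : ℂ := qPoch z q * qPoch (q * z⁻¹) q * qPoch q q

/-- The Jacobi theta function `[u]_r = x^{u²/r − u} Θ_{x^{2r}}(x^{2u}) / ((x^{2r};x^{2r})_∞)³`. -/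
noncomputable def jTheta (x : ℝ) (r u : ℂ) : ℂ :=
  xpow x (u ^ 2 / r - u) * jacTheta0 (xpow x (2 * r)) (xpow x (2 * u)) /
    (qPoch (xpow x (2 * r)) (xpow x (2 * r))) ^ 3

/-- `m`-th term of the `E_j E_j` contraction series (with `r* = r − 1`). -/
noncomputable def EEterm (x : ℝ) (r w : ℂ) (m : ℕ) : ℂ :=
  (1 / (m : ℂ)) * ((xpow x (r * m) - xpow x (-r * m)) *
      (xpow x m + xpow x (-m)) / (xpow x ((r - 1) * m) - xpow x (-(r - 1) * m))) * w ^ m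

lemma norm_xpow_lt_one {x : ℝ} (hx0 : 0 < x) (hx1 : x < 1) {c : ℂ} (hc : 0 < c.re) :
    ‖xpow x c‖ < 1 := by
  have hlog : Real.log x < 0 := Real.log_neg hx0 hx1
  rw [xpow, Complex.norm_exp, Real.exp_lt_one_iff]
  simp only [mul_re, ofReal_re, ofReal_im, mul_zero, sub_zero]
  exact mul_neg_of_pos_of_neg hc hlog

lemma xpow_add (x : ℝ) (c d : ℂ) : xpow x (c + d) = xpow x c * xpow x d := by
  simp only [xpow, add_mul, Complex.exp_add]

lemma xpow_neg (x : ℝ) (c : ℂ) : xpow x (-c) = (xpow x c)⁻¹ := by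
  simp only [xpow, neg_mul, Complex.exp_neg]

lemma xpow_mul_natCast (x : ℝ) (c : ℂ) (n : ℕ) : xpow x (c * n) = xpow x c ^ n := by
  rw [xpow, xpow, ← Complex.exp_nat_mul]
  ring_nf

lemma contraction_ratio_eq {K : Type*} [Field K] {P Q : K} (hP : P ≠ 0) (hQ : Q ≠ 0)
    (hPQ : (P / Q) ^ 2 ≠ 1) :
    (P - P⁻¹) * (Q + Q⁻¹) / (P * Q⁻¹ - P⁻¹ * Q) = 1 + (Q⁻¹ ^ 2 - P ^ 2) / (1 - (P / Q) ^ 2) := by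
  have hPQ₁ : P ^ 2 - Q ^ 2 ≠ 0 := by
    contrapose! hPQ
    rw [div_pow, sub_eq_zero.mp hPQ, div_self (pow_ne_zero 2 hQ)]
  have hPQ₂ : Q ^ 2 - P ^ 2 ≠ 0 := by rw [← neg_sub]; exact neg_ne_zero.mpr hPQ₁
  field_simp
  ring

-- The term of index `m + 1` of `-log (a;q)_∞ = ∑_{m ≥ 1} a^m / (m (1 - q^m))`.
noncomputable def qPochNegLogTerm (a q : ℂ) (m : ℕ) : ℂ :=
  a ^ (m + 1) / ((m + 1) * (1 - q ^ (m + 1)))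

lemma EEterm_eq {x : ℝ} {r : ℂ} (w : ℂ) {n : ℕ} (hn : xpow x (2 * (r - 1)) ^ n ≠ 1) :
    EEterm x r w n = w ^ n / n + ((xpow x (-2) * w) ^ n - (xpow x (2 * (r - 1) + 2) * w) ^ n) /
      (n * (1 - xpow x (2 * (r - 1)) ^ n)) := by
  set P := xpow x (r * n)
  set Q := xpow x n
  have hP : P ≠ 0 := Complex.exp_ne_zero _
  have hQ : Q ≠ 0 := Complex.exp_ne_zero _
  have hP2 : P ^ 2 = xpow x (2 * r * n) := by
    rw [← xpow_mul_natCast]; push_cast; ring_nf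
  have hQ2 : Q⁻¹ ^ 2 = xpow x (-2 * n) := by
    rw [← xpow_neg, ← xpow_mul_natCast]; push_cast; ring_nf
  have hqn : xpow x (2 * (r - 1)) ^ n = (P / Q) ^ 2 := by
    rw [div_pow, div_eq_mul_inv, ← inv_pow, hP2, hQ2, ← xpow_add, ← xpow_mul_natCast]; ring_nf
  have e1 : xpow x (-r * n) = P⁻¹ := by rw [← xpow_neg]; ring_nf
  have e2 : xpow x ((r - 1) * n) = P * Q⁻¹ := by rw [← xpow_neg, ← xpow_add]; ring_nf
  have e3 : xpow x (-(r - 1) * n) = P⁻¹ * Q := by rw [← xpow_neg, ← xpow_add]; ring_nf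
  have ea : (xpow x (-2) * w) ^ n = Q⁻¹ ^ 2 * w ^ n := by
    rw [mul_pow, hQ2, xpow_mul_natCast]
  have eb : (xpow x (2 * (r - 1) + 2) * w) ^ n = P ^ 2 * w ^ n := by
    rw [mul_pow, hP2, ← xpow_mul_natCast]; ring_nf
  rw [EEterm, e1, e2, e3, xpow_neg, contraction_ratio_eq hP hQ (hqn ▸ hn), ea, eb, hqn]
  simp only [div_eq_mul_inv, mul_inv]
  ring

lemma EEterm_succ_eq {x : ℝ} {r : ℂ} (w : ℂ) {m : ℕ} (hm : xpow x (2 * (r - 1)) ^ (m + 1) ≠ 1) :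
    EEterm x r w (m + 1) = qPochNegLogTerm w 0 m +
      (qPochNegLogTerm (xpow x (-2) * w) (xpow x (2 * (r - 1))) m -
        qPochNegLogTerm (xpow x (2 * (r - 1) + 2) * w) (xpow x (2 * (r - 1))) m) := by
  rw [EEterm_eq w hm, qPochNegLogTerm, qPochNegLogTerm, qPochNegLogTerm, zero_pow m.succ_ne_zero]
  push_cast
  ring

lemma ne_one_of_norm_lt_one {z : ℂ} (hz : ‖z‖ < 1) : z ≠ 1 := by
  rintro rfl
  simp at hz

lemma one_le_norm_natCast_add_one (m : ℕ) : (1 : ℝ) ≤ ‖(m : ℂ) + 1‖ := by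
  rw [← Nat.cast_succ, Complex.norm_natCast]
  exact_mod_cast m.succ_pos

lemma hasSum_pow_succ_div_neg_log {z : ℂ} (hz : ‖z‖ < 1) :
    HasSum (fun m : ℕ => z ^ (m + 1) / (m + 1)) (-log (1 - z)) := by
  simpa using (hasSum_nat_add_iff' 1).mpr (Complex.hasSum_taylorSeries_neg_log hz)

section qPoch

variable {q : ℂ} (hq : ‖q‖ < 1)
include hq

lemma norm_pow_succ_lt_one (m : ℕ) : ‖q ^ (m + 1)‖ < 1 :=
  norm_pow q (m + 1) ▸ pow_lt_one₀ (norm_nonneg q) hq m.succ_ne_zero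

lemma hasSum_qPochNegLogTerm (a : ℂ) (m : ℕ) :
    HasSum (fun k : ℕ => (q ^ k * a) ^ (m + 1) / (m + 1)) (qPochNegLogTerm a q m) := by
  have hgeom := hasSum_geometric_of_norm_lt_one (norm_pow_succ_lt_one hq m)
  have hterm : ∀ k : ℕ, (q ^ k * a) ^ (m + 1) / (m + 1) =
      a ^ (m + 1) / (m + 1) * (q ^ (m + 1)) ^ k := fun k => by
    rw [mul_pow, ← pow_mul, ← pow_mul, mul_comm k]
    ring
  have hval : qPochNegLogTerm a q m = a ^ (m + 1) / (m + 1) * (1 - q ^ (m + 1))⁻¹ := by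
    rw [qPochNegLogTerm, div_eq_mul_inv, mul_inv, div_eq_mul_inv, mul_assoc]
  simpa only [hterm, hval] using hgeom.mul_left (a ^ (m + 1) / (m + 1))

lemma norm_qPochNegLogTerm_le (a : ℂ) (m : ℕ) :
    ‖qPochNegLogTerm a q m‖ ≤ ‖a‖ ^ (m + 1) / (1 - ‖q‖) := by
  have hden : 1 - ‖q‖ ≤ ‖1 - q ^ (m + 1)‖ := by
    calc 1 - ‖q‖ ≤ 1 - ‖q‖ ^ (m + 1) := by
          gcongr; exact pow_le_of_le_one (norm_nonneg q) hq.le m.succ_ne_zero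
      _ ≤ ‖1 - q ^ (m + 1)‖ := by simpa using norm_sub_norm_le (1 : ℂ) (q ^ (m + 1))
  have hm := one_le_norm_natCast_add_one m
  rw [qPochNegLogTerm, norm_div, norm_mul, norm_pow, ← one_mul (1 - ‖q‖)]
  have : 0 < 1 - ‖q‖ := by linarith
  gcongr

lemma summable_norm_qPochNegLogTerm {a : ℂ} (ha : ‖a‖ < 1) :
    Summable (fun m : ℕ => ‖qPochNegLogTerm a q m‖) :=
  (((summable_nat_add_iff 1).mpr (summable_geometric_of_lt_one (norm_nonneg a) ha)).div_const
    _).of_nonneg_of_le (fun _ => norm_nonneg _) (norm_qPochNegLogTerm_le hq a)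

lemma summable_pow_succ_mul_geometric_div {a : ℂ} (ha : ‖a‖ < 1) :
    Summable (fun p : ℕ × ℕ => (q ^ p.2 * a) ^ (p.1 + 1) / (p.1 + 1)) := by
  refine Summable.of_norm_bounded (g := fun p : ℕ × ℕ => ‖a‖ ^ (p.1 + 1) * ‖q‖ ^ p.2)
    (((summable_nat_add_iff 1).mpr (summable_geometric_of_lt_one (norm_nonneg a) ha)).mul_of_nonneg
      (summable_geometric_of_lt_one (norm_nonneg q) hq) (fun _ => by positivity)
      (fun _ => by positivity)) ?_
  rintro ⟨m, k⟩
  have hqk : (‖q‖ ^ k) ^ (m + 1) ≤ ‖q‖ ^ k :=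
    pow_le_of_le_one (by positivity) (pow_le_one₀ (norm_nonneg q) hq.le) m.succ_ne_zero
  calc ‖(q ^ k * a) ^ (m + 1) / (m + 1)‖ ≤ ‖(q ^ k * a) ^ (m + 1)‖ := by
        rw [norm_div]; exact div_le_self (norm_nonneg _) (one_le_norm_natCast_add_one m)
    _ = (‖q‖ ^ k) ^ (m + 1) * ‖a‖ ^ (m + 1) := by rw [norm_pow, norm_mul, norm_pow, mul_pow]
    _ ≤ ‖a‖ ^ (m + 1) * ‖q‖ ^ k := by rw [mul_comm]; gcongr

theorem qPoch_eq_cexp_neg_tsum {a : ℂ} (ha : ‖a‖ < 1) :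
    qPoch a q = cexp (-∑' m : ℕ, qPochNegLogTerm a q m) := by
  set F : ℕ × ℕ → ℂ := fun p => (q ^ p.2 * a) ^ (p.1 + 1) / (p.1 + 1)
  have hF : Summable F := summable_pow_succ_mul_geometric_div hq ha
  have hqa : ∀ k : ℕ, ‖q ^ k * a‖ < 1 := fun k => by
    rw [norm_mul, norm_pow]
    exact (mul_le_of_le_one_left (norm_nonneg a) (pow_le_one₀ (norm_nonneg q) hq.le)).trans_lt ha
  -- Summing `F` over `k` first gives the series, summing over `m` first gives the logarithms.
  have hT : HasSum (qPochNegLogTerm a q) (∑' p, F p) :=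
    hF.hasSum.prod_fiberwise (hasSum_qPochNegLogTerm hq a)
  have hlog : HasSum (fun k : ℕ => -log (1 - q ^ k * a)) (∑' p, F p) :=
    ((Equiv.prodComm ℕ ℕ).hasSum_iff.mpr hF.hasSum).prod_fiberwise fun k =>
      hasSum_pow_succ_div_neg_log (z := q ^ k * a) (hqa k)
  rw [← hT.tsum_eq] at hlog
  have hprod := hlog.neg.cexp
  simp only [Function.comp_def, neg_neg,
    Complex.exp_log (sub_ne_zero.mpr (ne_one_of_norm_lt_one (hqa _)).symm)] at hprod
  exact hprod.tprod_eq

end qPoch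

lemma qPoch_zero_right (z : ℂ) : qPoch z 0 = 1 - z := by
  rw [qPoch, tprod_eq_mulSingle 0 fun j hj => by simp [zero_pow hj]]
  simp

theorem stmt19 (x : ℝ) (hx0 : 0 < x) (hx1 : x < 1) (r : ℂ) (hr : 1 < r.re)
    (w : ℂ) (hw : ‖w‖ < 1) (hw' : ‖xpow x (-2) * w‖ < 1) :
    Summable (fun m : ℕ => ‖EEterm x r w (m + 1)‖) ∧
    Complex.exp (-∑' m : ℕ, EEterm x r w (m + 1)) =
      (1 - w) * qPoch (xpow x (-2) * w) (xpow x (2 * (r - 1))) /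
        qPoch (xpow x (2 * (r - 1) + 2) * w) (xpow x (2 * (r - 1))) := by
  set q := xpow x (2 * (r - 1))
  set a := xpow x (-2) * w
  set b := xpow x (2 * (r - 1) + 2) * w
  have hq : ‖q‖ < 1 := norm_xpow_lt_one hx0 hx1 (by simpa using hr)
  have hb : ‖b‖ < 1 := by
    have hc : 0 < (2 * (r - 1) + 2).re := by
      rw [show 2 * (r - 1) + 2 = 2 * r by ring]; simpa using zero_lt_one.trans hr
    rw [norm_mul]
    exact mul_lt_one_of_nonneg_of_lt_one_left (norm_nonneg _) (norm_xpow_lt_one hx0 hx1 hc) hw.le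
  have h0 : ‖(0 : ℂ)‖ < 1 := by simp
  have hterm : ∀ m : ℕ, EEterm x r w (m + 1) =
      qPochNegLogTerm w 0 m + (qPochNegLogTerm a q m - qPochNegLogTerm b q m) := fun m =>
    EEterm_succ_eq w (ne_one_of_norm_lt_one (norm_pow_succ_lt_one hq m))
  have hsumm : ∀ {z p : ℂ}, ‖z‖ < 1 → ‖p‖ < 1 → Summable (qPochNegLogTerm z p) :=
    fun hz hp => (summable_norm_qPochNegLogTerm hp hz).of_norm
  refine ⟨?_, ?_⟩
  · simp only [hterm]
    exact ((summable_norm_qPochNegLogTerm h0 hw).add ((summable_norm_qPochNegLogTerm hq hw').add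
      (summable_norm_qPochNegLogTerm hq hb))).of_nonneg_of_le (fun _ => norm_nonneg _)
      fun m => (norm_add_le _ _).trans (add_le_add le_rfl (norm_sub_le _ _))
  · rw [tsum_congr hterm, (hsumm hw h0).tsum_add ((hsumm hw' hq).sub (hsumm hb hq)),
      (hsumm hw' hq).tsum_sub (hsumm hb hq), neg_add, neg_sub', exp_add, exp_sub,
      ← qPoch_eq_cexp_neg_tsum h0 hw, ← qPoch_eq_cexp_neg_tsum hq hw',
      ← qPoch_eq_cexp_neg_tsum hq hb, qPoch_zero_right, mul_div_assoc]
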